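/- Let R be a local ring with maximal ideal m over a field of characteristic 0, Γ a finite group acting on R by local automorphisms, Φ the averaging operator, and a the ideal generated by elements y₁,…,y_s ∈ ker Φ whose images generate the image of ker Φ in m/m². If ker Φ ⊆ a + m^r for some r ≥ 1, then ker Φ ⊆ a + m^{r+1}. -/

import Mathlib

/-!
Put `π x = x - Φ x`; then `x = π x` on `ker Φ`, and `π = |Γ|⁻¹ ∑_γ (id - γ)` with every `x - γ x`
in `ker Φ`. From `pb - γ(pb) = (p - γp) b + γp (b - γb)` and the hypotheses `ker Φ ⊆ a + m^r`,
`ker Φ ⊆ a + m²`, one gets `π(m^{r-1} m) ⊆ a + m^{r+1}`. For a multiple `c y` of a generator of `a`,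
split `c y = Φ(c) y + (c - Φ c) y`: the first summand lies in `a ∩ ker Φ`, so `π` fixes it, and the
same product formula handles the second since `c - Φ c ∈ ker Φ ⊆ m`. Hence `π(a + m^r) ⊆ a + m^{r+1}`,
and `ker Φ ⊆ a + m^r` is fixed pointwise by `π`.
-/

open Finset

section

variable {k R Γ : Type*} [Field k] [CommRing R] [Algebra k R] [Group Γ] (ρ : Γ →* (R ≃ₐ[k] R))
  {m a : Ideal R} {r : ℕ}

theorem mul_mem_sup_mul_of_mem_sup {I J K : Ideal R} {u v : R} (hu : u ∈ I ⊔ J) (hv : v ∈ K) :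
    u * v ∈ I ⊔ J * K := by
  have := Ideal.mul_mem_mul hu hv
  rw [Ideal.sup_mul] at this
  exact (sup_le_sup_right Ideal.mul_le_left _ : I * K ⊔ J * K ≤ I ⊔ J * K) this

theorem map_mem_pow_of_forall_map_mem (hm : ∀ γ, ∀ x ∈ m, ρ γ x ∈ m) (γ : Γ) {t : ℕ} {x : R}
    (hx : x ∈ m ^ t) : ρ γ x ∈ m ^ t := by
  refine Ideal.pow_right_mono (Ideal.map_le_iff_le_comap.2 (hm γ)) t ?_
  rw [← Ideal.map_pow]
  exact Ideal.mem_map_of_mem _ hx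

theorem mul_sub_map_mul (γ : Γ) (p b : R) :
    p * b - ρ γ (p * b) = (p - ρ γ p) * b + ρ γ p * (b - ρ γ b) := by
  rw [map_mul]
  ring

variable [Fintype Γ]

def reynolds : R →ₗ[k] R := (Fintype.card Γ : k)⁻¹ • ∑ γ, (ρ γ).toLinearMap

theorem reynolds_apply (x : R) : reynolds ρ x = (Fintype.card Γ : k)⁻¹ • ∑ γ, ρ γ x := by
  simp [reynolds]

theorem reynolds_map (γ : Γ) (x : R) : reynolds ρ (ρ γ x) = reynolds ρ x := by
  simp only [reynolds_apply, ← AlgEquiv.mul_apply, ← map_mul]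
  exact congrArg _ (Fintype.sum_equiv (Equiv.mulRight γ) _ _ fun _ => rfl)

theorem map_reynolds (γ : Γ) (x : R) : ρ γ (reynolds ρ x) = reynolds ρ x := by
  simp only [reynolds_apply, map_smul, map_sum, ← AlgEquiv.mul_apply, ← map_mul]
  exact congrArg _ (Fintype.sum_equiv (Equiv.mulLeft γ) _ _ fun _ => rfl)

theorem reynolds_sub_map (γ : Γ) (x : R) : reynolds ρ (x - ρ γ x) = 0 := by
  rw [map_sub, reynolds_map, sub_self]

theorem reynolds_mul_of_forall_map_eq {t : R} (ht : ∀ γ, ρ γ t = t) (x : R) :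
    reynolds ρ (t * x) = t * reynolds ρ x := by
  simp only [reynolds_apply, map_mul, ht, ← mul_sum, mul_smul_comm]

variable [NeZero (Fintype.card Γ : k)]

theorem sub_reynolds (x : R) :
    x - reynolds ρ x = (Fintype.card Γ : k)⁻¹ • ∑ γ, (x - ρ γ x) := by
  rw [reynolds_apply, sum_sub_distrib, sum_const, card_univ, smul_sub,
    ← Nat.cast_smul_eq_nsmul k, inv_smul_smul₀ (NeZero.ne _)]

theorem reynolds_sub_reynolds (x : R) : reynolds ρ (x - reynolds ρ x) = 0 := by
  simp only [sub_reynolds, map_smul, map_sum, reynolds_sub_map, sum_const_zero, smul_zero]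

theorem sub_reynolds_mem {I : Ideal R} {x : R} (h : ∀ γ, x - ρ γ x ∈ I) :
    x - reynolds ρ x ∈ I := by
  rw [sub_reynolds, Algebra.smul_def]
  exact I.mul_mem_left _ (I.sum_mem fun γ _ => h γ)

theorem sub_reynolds_mem_of_mem_pow (hm : ∀ γ, ∀ x ∈ m, ρ γ x ∈ m)
    (hK2 : ∀ x, reynolds ρ x = 0 → x ∈ a ⊔ m ^ 2)
    (hKr : ∀ x, reynolds ρ x = 0 → x ∈ a ⊔ m ^ (r + 1)) {z : R} (hz : z ∈ m ^ (r + 1)) :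
    z - reynolds ρ z ∈ a ⊔ m ^ (r + 2) := by
  rw [pow_succ] at hz
  refine Submodule.mul_induction_on hz (fun p hp b hb => sub_reynolds_mem ρ fun γ => ?_)
    fun x y hx hy => ?_
  · rw [mul_sub_map_mul]
    refine add_mem ?_ ?_
    · simpa only [← pow_succ] using mul_mem_sup_mul_of_mem_sup (hKr _ (reynolds_sub_map ρ γ p)) hb
    · rw [mul_comm, show r + 2 = 2 + r by omega, pow_add]
      exact mul_mem_sup_mul_of_mem_sup (hK2 _ (reynolds_sub_map ρ γ b))
        (map_mem_pow_of_forall_map_mem ρ hm γ hp)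
  · rw [map_add, add_sub_add_comm]
    exact add_mem hx hy

theorem sub_reynolds_mul_mem (hm : ∀ γ, ∀ x ∈ m, ρ γ x ∈ m)
    (hKm : ∀ x, reynolds ρ x = 0 → x ∈ m)
    (hKr : ∀ x, reynolds ρ x = 0 → x ∈ a ⊔ m ^ (r + 1))
    {y : R} (hy : reynolds ρ y = 0) (hya : y ∈ a) (c : R) :
    c * y - reynolds ρ (c * y) ∈ a ⊔ m ^ (r + 2) := by
  set g := c - reynolds ρ c
  have hg : reynolds ρ g = 0 := reynolds_sub_reynolds ρ c
  have hg_mem : g * y - reynolds ρ (g * y) ∈ a ⊔ m ^ (r + 2) := sub_reynolds_mem ρ fun γ => by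
    rw [mul_sub_map_mul, mul_comm (ρ γ g)]
    refine add_mem (Ideal.mem_sup_left (a.mul_mem_left _ hya)) ?_
    simpa only [← pow_succ] using
      mul_mem_sup_mul_of_mem_sup (hKr _ (reynolds_sub_map ρ γ y)) (hm γ g (hKm g hg))
  have hinv : reynolds ρ (reynolds ρ c * y) = 0 := by
    rw [reynolds_mul_of_forall_map_eq ρ (map_reynolds ρ · c), hy, mul_zero]
  have hc : c * y = reynolds ρ c * y + g * y := by ring
  rw [hc, map_add, hinv, zero_add, add_sub_assoc]
  exact add_mem (Ideal.mem_sup_left (a.mul_mem_left _ hya)) hg_mem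

theorem sub_reynolds_mem_of_mem_span {S : Set R} (hm : ∀ γ, ∀ x ∈ m, ρ γ x ∈ m)
    (hKm : ∀ x, reynolds ρ x = 0 → x ∈ m)
    (hKr : ∀ x, reynolds ρ x = 0 → x ∈ Ideal.span S ⊔ m ^ (r + 1))
    (hS : ∀ y ∈ S, reynolds ρ y = 0) {x : R} (hx : x ∈ Ideal.span S) :
    x - reynolds ρ x ∈ Ideal.span S ⊔ m ^ (r + 2) := by
  suffices ∀ c, c * x - reynolds ρ (c * x) ∈ Ideal.span S ⊔ m ^ (r + 2) by
    simpa only [one_mul] using this 1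
  induction hx using Submodule.span_induction with
  | mem y hy => exact sub_reynolds_mul_mem ρ hm hKm hKr (hS y hy) (Ideal.subset_span hy)
  | zero => simp
  | add x y _ _ hx hy =>
    intro c
    rw [mul_add, map_add, add_sub_add_comm]
    exact add_mem (hx c) (hy c)
  | smul d x _ hx =>
    intro c
    rw [smul_eq_mul, ← mul_assoc]
    exact hx (c * d)

theorem ker_reynolds_subset_sup_pow_succ {S : Set R} (hm : ∀ γ, ∀ x ∈ m, ρ γ x ∈ m)
    (hKm : ∀ x, reynolds ρ x = 0 → x ∈ m)
    (hK2 : ∀ x, reynolds ρ x = 0 → x ∈ Ideal.span S ⊔ m ^ 2)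
    (hKr : ∀ x, reynolds ρ x = 0 → x ∈ Ideal.span S ⊔ m ^ (r + 1))
    (hS : ∀ y ∈ S, reynolds ρ y = 0) :
    {x | reynolds ρ x = 0} ⊆ ↑(Ideal.span S ⊔ m ^ (r + 2)) := by
  intro x (hx : reynolds ρ x = 0)
  obtain ⟨u, hu, z, hz, rfl⟩ := Submodule.mem_sup.1 (hKr x hx)
  rw [SetLike.mem_coe, ← sub_zero (u + z), ← hx, map_add, add_sub_add_comm]
  exact add_mem (sub_reynolds_mem_of_mem_span ρ hm hKm hKr hS hu)
    (sub_reynolds_mem_of_mem_pow ρ hm hK2 hKr hz)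

end

theorem stmt6_general {k R Γ : Type*} [Field k] [CharZero k] [CommRing R] [Algebra k R]
    [IsLocalRing R]
    [Group Γ] [Fintype Γ]
    (ρ : Γ →* (R ≃ₐ[k] R))
    (Φ : R → R)
    (hΦ : ∀ x : R, Φ x = (Fintype.card Γ : k)⁻¹ • ∑ γ : Γ, ρ γ x)
    (s : ℕ) (y : Fin s → R)
    (hyker : ∀ i, Φ (y i) = 0)
    -- the images of the `y i` generate the image of `ker Φ` in `m/m²`
    (hgen : ∀ x : R, Φ x = 0 → x ∈ IsLocalRing.maximalIdeal R →
      ∃ c : Fin s → R, x - ∑ i, c i * y i ∈ (IsLocalRing.maximalIdeal R) ^ 2)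
    (a : Ideal R) (ha : a = Ideal.span (Set.range y))
    (r : ℕ) (hr : 1 ≤ r)
    (hsub : {x : R | Φ x = 0} ⊆ ↑(a + (IsLocalRing.maximalIdeal R) ^ r)) :
    {x : R | Φ x = 0} ⊆ ↑(a + (IsLocalRing.maximalIdeal R) ^ (r + 1)) := by
  obtain rfl : Φ = reynolds ρ := funext fun x => (hΦ x).trans (reynolds_apply ρ x).symm
  obtain ⟨r, rfl⟩ := Nat.exists_eq_add_of_le' hr
  set m := IsLocalRing.maximalIdeal R
  rcases eq_or_ne a ⊤ with rfl | ha_top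
  · simp
  have hKm : ∀ x, reynolds ρ x = 0 → x ∈ m := fun x hx =>
    sup_le (IsLocalRing.le_maximalIdeal ha_top) (Ideal.pow_le_self r.succ_ne_zero) (hsub hx)
  have hK2 : ∀ x, reynolds ρ x = 0 → x ∈ a ⊔ m ^ 2 := fun x hx => by
    obtain ⟨c, hc⟩ := hgen x hx (hKm x hx)
    have hsum : ∑ i, c i * y i ∈ a :=
      ha ▸ Ideal.sum_mem _ fun i _ => Ideal.mul_mem_left _ _ (Ideal.subset_span ⟨i, rfl⟩)
    simpa using Submodule.add_mem_sup hsum hc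
  subst ha
  exact ker_reynolds_subset_sup_pow_succ ρ (fun γ => map_nonunit (ρ γ : R →+* R)) hKm hK2 hsub
    (by rintro _ ⟨i, rfl⟩; exact hyker i)

/-- Let `R` be a local ring over a field of characteristic 0, `Γ` a finite
group acting on `R` by local automorphisms, `Φ` the averaging operator, and `a`
the ideal generated by elements `y₁, …, y_s ∈ ker Φ ∩ m` whose images generate
the image of `ker Φ` in `m/m²`.  If `ker Φ ⊆ a + m^r` for some `r ≥ 1`, then
`ker Φ ⊆ a + m^{r+1}`. -/
theorem stmt6 {k R Γ : Type*} [Field k] [CharZero k] [CommRing R] [Algebra k R]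
    [IsLocalRing R] [IsNoetherianRing R]
    [Group Γ] [Fintype Γ]
    (ρ : Γ →* (R ≃ₐ[k] R))
    (hloc : ∀ γ : Γ, ∀ x ∈ IsLocalRing.maximalIdeal R,
      ρ γ x ∈ IsLocalRing.maximalIdeal R)
    (Φ : R → R)
    (hΦ : ∀ x : R, Φ x = (Fintype.card Γ : k)⁻¹ • ∑ γ : Γ, ρ γ x)
    (s : ℕ) (y : Fin s → R)
    (hyker : ∀ i, Φ (y i) = 0)
    (hym : ∀ i, y i ∈ IsLocalRing.maximalIdeal R)
    -- the images of the `y i` generate the image of `ker Φ` in `m/m²`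
    (hgen : ∀ x : R, Φ x = 0 → x ∈ IsLocalRing.maximalIdeal R →
      ∃ c : Fin s → R, x - ∑ i, c i * y i ∈ (IsLocalRing.maximalIdeal R) ^ 2)
    (a : Ideal R) (ha : a = Ideal.span (Set.range y))
    (r : ℕ) (hr : 1 ≤ r)
    (hsub : {x : R | Φ x = 0} ⊆ ↑(a + (IsLocalRing.maximalIdeal R) ^ r)) :
    {x : R | Φ x = 0} ⊆ ↑(a + (IsLocalRing.maximalIdeal R) ^ (r + 1)) :=
  stmt6_general ρ Φ hΦ s y hyker hgen a ha r hr hsub
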